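/- arXiv:1806.07949 — 2 statements merged into one kernel-verified Lean document; each statement's English description precedes it below -/
import Mathlib

section
/- The series ∑_{m=0}^∞ a/((m+1)(m+a)) with a = 23/12 equals (23/11)·(12/11 − log 24 + (2+√3)·π/2 + √3·log(2−√3) − log √3). -/
open Real MeasureTheory

def Pp (x : ℝ) : ℝ := x^11+x^10+x^9+x^8+x^7+x^6+x^5+x^4+x^3+x^2+x+1

lemma Pp_cont : Continuous Pp := by unfold Pp; fun_prop

lemma hPp {x : ℝ} (hx : 0 ≤ x) : 0 < Pp x := by
  unfold Pp
  nlinarith [pow_nonneg hx 11, pow_nonneg hx 10, pow_nonneg hx 9, pow_nonneg hx 8,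
    pow_nonneg hx 7, pow_nonneg hx 6, pow_nonneg hx 5, pow_nonneg hx 4, pow_nonneg hx 3,
    pow_nonneg hx 2]

lemma term_integral (m : ℕ) :
    ∫ x in Set.Ioo (0:ℝ) 1, (12*(x^(12*m+11) - x^(12*m+22))) =
      12/(12*(m:ℝ)+12) - 12/(12*(m:ℝ)+23) := by
  rw [← MeasureTheory.integral_Ioc_eq_integral_Ioo,
      ← intervalIntegral.integral_of_le (by norm_num : (0:ℝ) ≤ 1),
      intervalIntegral.integral_const_mul,
      intervalIntegral.integral_sub (intervalIntegral.intervalIntegrable_pow _)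
        (intervalIntegral.intervalIntegrable_pow _),
      integral_pow, integral_pow]
  have h1 : (12*(m:ℝ)+12) ≠ 0 := by positivity
  have h2 : (12*(m:ℝ)+23) ≠ 0 := by positivity
  rw [one_pow, one_pow, zero_pow (by omega), zero_pow (by omega)]
  push_cast
  field_simp
  ring

lemma summable_c : Summable (fun m : ℕ => 12/(12*(m:ℝ)+12) - 12/(12*(m:ℝ)+23)) := by
  have hs : Summable (fun n : ℕ => 1/((n:ℝ)+1)^2) := by
    have h0 : Summable (fun n : ℕ => 1/((n:ℝ))^2) := summable_one_div_nat_pow.mpr (by norm_num)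
    have := (summable_nat_add_iff 1).mpr h0
    exact this.congr (fun n => by push_cast; ring)
  apply hs.of_nonneg_of_le
  · intro m
    have h1 : (0:ℝ) < 12*(m:ℝ)+12 := by positivity
    have h2 : (0:ℝ) < 12*(m:ℝ)+23 := by positivity
    rw [sub_nonneg]
    apply div_le_div_of_nonneg_left (by norm_num) h1 (by linarith)
  · intro m
    have h1 : (0:ℝ) < 12*(m:ℝ)+12 := by positivity
    have h2 : (0:ℝ) < 12*(m:ℝ)+23 := by positivity
    have he : 12/(12*(m:ℝ)+12) - 12/(12*(m:ℝ)+23)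
        = 132/((12*(m:ℝ)+12)*(12*(m:ℝ)+23)) := by field_simp; ring
    rw [he, div_le_div_iff₀ (by positivity) (by positivity)]
    nlinarith [sq_nonneg ((m:ℝ)+1), Nat.cast_nonneg (α := ℝ) m]

lemma c_nonneg (m : ℕ) : (0:ℝ) ≤ 12/(12*(m:ℝ)+12) - 12/(12*(m:ℝ)+23) := by
  have h1 : (0:ℝ) < 12*(m:ℝ)+12 := by positivity
  rw [sub_nonneg]
  apply div_le_div_of_nonneg_left (by norm_num) h1 (by linarith)

lemma f_cont (m : ℕ) : Continuous (fun x : ℝ => 12*(x^(12*m+11) - x^(12*m+22))) := by fun_prop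

lemma f_nonneg (m : ℕ) {x : ℝ} (hx : x ∈ Set.Ioo (0:ℝ) 1) :
    0 ≤ 12*(x^(12*m+11) - x^(12*m+22)) := by
  obtain ⟨h0, h1⟩ := hx
  have := pow_le_pow_of_le_one h0.le h1.le (show 12*m+11 ≤ 12*m+22 by omega)
  linarith

lemma swap_sum_integral :
    ∑' m : ℕ, (12/(12*(m:ℝ)+12) - 12/(12*(m:ℝ)+23)) =
    ∫ x in Set.Ioo (0:ℝ) 1, (12*x^10 - 12*x^10/Pp x) := by
  have hmeas : ∀ m : ℕ, AEStronglyMeasurable (fun x : ℝ => 12*(x^(12*m+11) - x^(12*m+22)))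
      (volume.restrict (Set.Ioo (0:ℝ) 1)) := fun m => (f_cont m).aestronglyMeasurable
  have hint : ∀ m : ℕ, IntegrableOn (fun x : ℝ => 12*(x^(12*m+11) - x^(12*m+22)))
      (Set.Ioo (0:ℝ) 1) := by
    intro m
    exact ((f_cont m).continuousOn.integrableOn_compact isCompact_Icc).mono_set
      Set.Ioo_subset_Icc_self
  have hlin : ∀ m : ℕ, ∫⁻ x in Set.Ioo (0:ℝ) 1, ‖12*(x^(12*m+11) - x^(12*m+22))‖₊ =
      ENNReal.ofReal (12/(12*(m:ℝ)+12) - 12/(12*(m:ℝ)+23)) := by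
    intro m
    rw [← term_integral m]
    rw [MeasureTheory.ofReal_integral_eq_lintegral_ofReal (hint m)
      ((MeasureTheory.ae_restrict_mem measurableSet_Ioo).mono (fun x hx => f_nonneg m hx))]
    apply MeasureTheory.lintegral_congr_ae
    filter_upwards [MeasureTheory.ae_restrict_mem measurableSet_Ioo] with x hx
    rw [← Real.enorm_eq_ofReal (f_nonneg m hx)]
    rfl
  have hfin : ∑' m : ℕ, ∫⁻ x in Set.Ioo (0:ℝ) 1, ‖12*(x^(12*m+11) - x^(12*m+22))‖₊ ≠ ⊤ := by
    simp_rw [hlin]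
    rw [← ENNReal.ofReal_tsum_of_nonneg c_nonneg summable_c]
    exact ENNReal.ofReal_ne_top
  have h := MeasureTheory.integral_tsum (μ := volume.restrict (Set.Ioo (0:ℝ) 1))
    (f := fun (m : ℕ) (x : ℝ) => 12*(x^(12*m+11) - x^(12*m+22))) hmeas hfin
  simp_rw [term_integral] at h
  rw [← h]
  apply MeasureTheory.setIntegral_congr_fun measurableSet_Ioo
  intro x hx
  obtain ⟨h0, h1⟩ := hx
  have hP := hPp h0.le
  have hx12 : x^12 < 1 := pow_lt_one₀ h0.le h1 (by norm_num)
  have hx12' : (0:ℝ) ≤ x^12 := by positivity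
  have hgeo : ∑' m : ℕ, (x^12)^m = (1 - x^12)⁻¹ := tsum_geometric_of_lt_one hx12' hx12
  have hterm : ∀ m : ℕ, 12*(x^(12*m+11) - x^(12*m+22)) = (12*(x^11 - x^22)) * (x^12)^m := by
    intro m
    rw [show 12*m+11 = 12*m+11 from rfl, pow_add, pow_add, pow_mul]
    ring
  simp only [hterm]
  rw [tsum_mul_left, hgeo]
  have hne : (1 - x^12) ≠ 0 := by nlinarith
  unfold Pp
  field_simp
  ring

lemma arctan_sqrt3 : Real.arctan (Real.sqrt 3) = π/3 := by
  apply Real.arctan_eq_of_tan_eq Real.tan_pi_div_three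
  constructor <;> [linarith [Real.pi_pos]; linarith [Real.pi_pos]]

lemma arctan_inv_sqrt3 : Real.arctan (1/Real.sqrt 3) = π/6 := by
  apply Real.arctan_eq_of_tan_eq Real.tan_pi_div_six
  constructor <;> [linarith [Real.pi_pos]; linarith [Real.pi_pos]]

lemma arctan_two_sub_sqrt3 : Real.arctan (2 - Real.sqrt 3) = π/12 := by
  have hr : Real.sqrt 3 ^ 2 = 3 := Real.sq_sqrt (by norm_num)
  have hrlt : Real.sqrt 3 < 2 := by nlinarith [Real.sqrt_nonneg 3]
  have hr1 : (1:ℝ) < Real.sqrt 3 := by nlinarith [Real.sqrt_nonneg 3]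
  have h := Real.two_mul_arctan (x := 2 - Real.sqrt 3) (by linarith) (by linarith)
  have harg : 2*(2 - Real.sqrt 3)/(1 - (2 - Real.sqrt 3)^2) = 1/Real.sqrt 3 := by
    have hd : (1 - (2 - Real.sqrt 3)^2) = 2*Real.sqrt 3*(2 - Real.sqrt 3) := by
      linear_combination hr
    rw [hd, div_eq_div_iff (by nlinarith) (by nlinarith)]
    ring
  rw [harg, arctan_inv_sqrt3] at h
  linarith

lemma arctan_two_add_sqrt3 : Real.arctan (2 + Real.sqrt 3) = 5*π/12 := by
  have hr : Real.sqrt 3 ^ 2 = 3 := Real.sq_sqrt (by norm_num)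
  have hrlt : Real.sqrt 3 < 2 := by nlinarith [Real.sqrt_nonneg 3]
  have h := Real.arctan_inv_of_pos (x := 2 - Real.sqrt 3) (by linarith)
  have hinv : (2 - Real.sqrt 3)⁻¹ = 2 + Real.sqrt 3 :=
    inv_eq_of_mul_eq_one_right (by linear_combination -hr)
  rw [hinv, arctan_two_sub_sqrt3] at h
  linarith
noncomputable def Aa (x : ℝ) : ℝ :=
  2 * Real.log (x + 1)
  + (1 - Real.sqrt 3 / 2) * Real.log (x^2 - Real.sqrt 3 * x + 1) - Real.arctan (2*x - Real.sqrt 3)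
  + (1/2) * Real.log (x^2 - x + 1) - Real.sqrt 3 * Real.arctan ((2*x - 1)/Real.sqrt 3)
  + Real.log (x^2 + 1) - 2 * Real.arctan x
  + (3/2) * Real.log (x^2 + x + 1) - Real.sqrt 3 * Real.arctan ((2*x + 1)/Real.sqrt 3)
  + (1 + Real.sqrt 3 / 2) * Real.log (x^2 + Real.sqrt 3 * x + 1) - Real.arctan (2*x + Real.sqrt 3)

lemma Aa_zero : Aa 0 = 0 := by
  unfold Aa
  norm_num [Real.arctan_neg, neg_div]

lemma Aa_one : Aa 1 = Real.log 24 - (2 + Real.sqrt 3) * π / 2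
    - Real.sqrt 3 * Real.log (2 - Real.sqrt 3) + Real.log (Real.sqrt 3) := by
  have hr : Real.sqrt 3 ^ 2 = 3 := Real.sq_sqrt (by norm_num)
  have hrpos : (0:ℝ) < Real.sqrt 3 := Real.sqrt_pos.mpr (by norm_num)
  have hrlt : Real.sqrt 3 < 2 := by nlinarith
  have hlog_add : Real.log (2 + Real.sqrt 3) = - Real.log (2 - Real.sqrt 3) := by
    have hmul : (2 - Real.sqrt 3) * (2 + Real.sqrt 3) = 1 := by linear_combination -hr
    have := Real.log_mul (x := 2 - Real.sqrt 3) (y := 2 + Real.sqrt 3) (ne_of_gt (by nlinarith)) (ne_of_gt (by nlinarith))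
    rw [hmul, Real.log_one] at this
    linarith
  have hlog24 : Real.log 24 = 3 * Real.log 2 + Real.log 3 := by
    rw [show (24:ℝ) = 2^3 * 3 by norm_num, Real.log_mul (by norm_num) (by norm_num),
      Real.log_pow]
    push_cast; ring
  have hlogr : Real.log (Real.sqrt 3) = Real.log 3 / 2 := Real.log_sqrt (by norm_num)
  have h3div : (3:ℝ)/Real.sqrt 3 = Real.sqrt 3 := by
    rw [div_eq_iff hrpos.ne']
    nlinarith [hr]
  unfold Aa
  norm_num [h3div]
  rw [show (1 - Real.sqrt 3 + 1 : ℝ) = 2 - Real.sqrt 3 by ring,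
    show (1 + Real.sqrt 3 + 1 : ℝ) = 2 + Real.sqrt 3 by ring]
  rw [arctan_two_sub_sqrt3, arctan_two_add_sqrt3, hlog_add, hlog24, hlogr]
  ring
lemma pairA {x : ℝ} (hr : Real.sqrt 3 ^ 2 = 3)
    (hq1 : (0:ℝ) < x^2 - Real.sqrt 3 * x + 1) (hq5 : (0:ℝ) < x^2 + Real.sqrt 3 * x + 1) :
    (1 - √3 / 2) * ((2 * x - √3) / (x ^ 2 - √3 * x + 1)) - (1/2) / (x^2 - √3*x + 1)
    + ((1 + √3 / 2) * ((2 * x + √3) / (x ^ 2 + √3 * x + 1)) - (1/2) / (x^2 + √3*x + 1))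
    = (4*x^3-4*x^2-2*x+2)/(x^4-x^2+1) := by
  have hr4 : Real.sqrt 3 ^ 4 = 9 := by
    have : Real.sqrt 3 ^ 4 = (Real.sqrt 3 ^ 2) ^ 2 := by ring
    rw [this, hr]; norm_num
  have h15 : (x^2 - √3*x + 1) * (x^2 + √3*x + 1) = x^4 - x^2 + 1 := by
    linear_combination (-(x^2) : ℝ) * hr
  rw [← h15]
  generalize hA : x^2 - √3*x + 1 = A at *
  generalize hB : x^2 + √3*x + 1 = B at *
  field_simp
  subst hA hB
  ring_nf
  simp only [hr, hr4]
  ring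

lemma pairB {x : ℝ} (hq2 : (0:ℝ) < x^2 - x + 1) (hq4 : (0:ℝ) < x^2 + x + 1) :
    1 / 2 * ((2 * x - 1) / (x ^ 2 - x + 1)) - (3/2) / (x^2 - x + 1)
    + (3 / 2 * ((2 * x + 1) / (x ^ 2 + x + 1)) - (3/2) / (x^2 + x + 1))
    = (4*x^3-4*x^2+2*x-2)/(x^4+x^2+1) := by
  have h15 : (x^2 - x + 1) * (x^2 + x + 1) = x^4 + x^2 + 1 := by ring
  rw [← h15]
  generalize hA : x^2 - x + 1 = A at *
  generalize hB : x^2 + x + 1 = B at *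
  field_simp
  subst hA hB
  ring

lemma pairC {x : ℝ} (h1 : (0:ℝ) < x + 1) (hq3 : (0:ℝ) < x^2 + 1) :
    2 * (1 / (x + 1)) + (2 * x / (x ^ 2 + 1) - 2 / (x ^ 2 + 1))
    = 4*x^2/(x^3+x^2+x+1) := by
  have h15 : (x + 1) * (x^2 + 1) = x^3+x^2+x+1 := by ring
  rw [← h15]
  field_simp
  ring

lemma combine {x : ℝ} (hx : 0 ≤ x) :
    4*x^2/(x^3+x^2+x+1) + (4*x^3-4*x^2-2*x+2)/(x^4-x^2+1) + (4*x^3-4*x^2+2*x-2)/(x^4+x^2+1)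
    = 12 * x ^ 10 / (x^11+x^10+x^9+x^8+x^7+x^6+x^5+x^4+x^3+x^2+x+1) := by
  have hP : (0:ℝ) < x^11+x^10+x^9+x^8+x^7+x^6+x^5+x^4+x^3+x^2+x+1 := by
    nlinarith [pow_nonneg hx 11, pow_nonneg hx 10, pow_nonneg hx 9, pow_nonneg hx 8,
      pow_nonneg hx 7, pow_nonneg hx 6, pow_nonneg hx 5, pow_nonneg hx 4, pow_nonneg hx 3,
      pow_nonneg hx 2]
  have h1 : (0:ℝ) < x^3+x^2+x+1 := by positivity
  have h2 : (0:ℝ) < x^4-x^2+1 := by nlinarith [sq_nonneg (x^2-1), sq_nonneg x]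
  have h3 : (0:ℝ) < x^4+x^2+1 := by positivity
  generalize hC : x^4-x^2+1 = C at *
  field_simp
  subst hC
  ring


lemma hasDerivAt_Aa {x : ℝ} (hx : 0 ≤ x) : HasDerivAt Aa (12*x^10 / Pp x) x := by
  have hr : Real.sqrt 3 ^ 2 = 3 := Real.sq_sqrt (by norm_num)
  have hrpos : (0:ℝ) < Real.sqrt 3 := Real.sqrt_pos.mpr (by norm_num)
  have h1 : (0:ℝ) < x + 1 := by linarith
  have hq1 : (0:ℝ) < x^2 - Real.sqrt 3 * x + 1 := by nlinarith [sq_nonneg (2*x - Real.sqrt 3)]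
  have hq2 : (0:ℝ) < x^2 - x + 1 := by nlinarith [sq_nonneg (2*x - 1)]
  have hq3 : (0:ℝ) < x^2 + 1 := by positivity
  have hq4 : (0:ℝ) < x^2 + x + 1 := by positivity
  have hq5 : (0:ℝ) < x^2 + Real.sqrt 3 * x + 1 := by positivity
  have d1 : HasDerivAt (fun x : ℝ => 2 * Real.log (x + 1)) (2 * (1 / (x + 1))) x := by
    have := (((hasDerivAt_id x).add_const 1).log h1.ne').const_mul 2
    simpa using this
  have dq1 : HasDerivAt (fun x : ℝ => x^2 - Real.sqrt 3 * x + 1) (2*x - Real.sqrt 3) x := by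
    have := ((hasDerivAt_pow 2 x).sub ((hasDerivAt_id x).const_mul (Real.sqrt 3))).add_const 1
    simpa using this
  have d2 : HasDerivAt (fun x : ℝ => (1 - Real.sqrt 3 / 2) * Real.log (x^2 - Real.sqrt 3 * x + 1))
      ((1 - Real.sqrt 3 / 2) * ((2*x - Real.sqrt 3) / (x^2 - Real.sqrt 3 * x + 1))) x :=
    (dq1.log hq1.ne').const_mul _
  have d3 : HasDerivAt (fun x : ℝ => Real.arctan (2*x - Real.sqrt 3))
      (2 / (1 + (2*x - Real.sqrt 3)^2)) x := by
    have hin : HasDerivAt (fun x : ℝ => 2*x - Real.sqrt 3) 2 x := by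
      simpa using ((hasDerivAt_id x).const_mul 2).sub_const (Real.sqrt 3)
    have := hin.arctan
    simpa [div_eq_mul_inv, mul_comm] using this
  have dq2 : HasDerivAt (fun x : ℝ => x^2 - x + 1) (2*x - 1) x := by
    have := ((hasDerivAt_pow 2 x).sub (hasDerivAt_id x)).add_const 1
    simpa using this
  have d4 : HasDerivAt (fun x : ℝ => (1/2) * Real.log (x^2 - x + 1))
      ((1/2) * ((2*x - 1) / (x^2 - x + 1))) x := (dq2.log hq2.ne').const_mul _
  have d5 : HasDerivAt (fun x : ℝ => Real.sqrt 3 * Real.arctan ((2*x - 1)/Real.sqrt 3))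
      (Real.sqrt 3 * (1 / (1 + ((2*x - 1)/Real.sqrt 3)^2) * (2/Real.sqrt 3))) x := by
    have hin : HasDerivAt (fun x : ℝ => (2*x - 1)/Real.sqrt 3) (2/Real.sqrt 3) x := by
      exact (((hasDerivAt_id x).const_mul 2).sub_const 1).div_const _ |>.congr_deriv (by ring)
    exact (hin.arctan).const_mul _
  have d6 : HasDerivAt (fun x : ℝ => Real.log (x^2 + 1)) ((2*x) / (x^2 + 1)) x := by
    have dq : HasDerivAt (fun x : ℝ => x^2 + 1) (2*x) x := by
      simpa using (hasDerivAt_pow 2 x).add_const 1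
    exact dq.log hq3.ne'
  have d7 : HasDerivAt (fun x : ℝ => 2 * Real.arctan x) (2 * (1 / (1 + x^2))) x :=
    (Real.hasDerivAt_arctan x).const_mul 2
  have dq4 : HasDerivAt (fun x : ℝ => x^2 + x + 1) (2*x + 1) x := by
    have := ((hasDerivAt_pow 2 x).add (hasDerivAt_id x)).add_const 1
    simpa using this
  have d8 : HasDerivAt (fun x : ℝ => (3/2) * Real.log (x^2 + x + 1))
      ((3/2) * ((2*x + 1) / (x^2 + x + 1))) x := (dq4.log hq4.ne').const_mul _
  have d9 : HasDerivAt (fun x : ℝ => Real.sqrt 3 * Real.arctan ((2*x + 1)/Real.sqrt 3))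
      (Real.sqrt 3 * (1 / (1 + ((2*x + 1)/Real.sqrt 3)^2) * (2/Real.sqrt 3))) x := by
    have hin : HasDerivAt (fun x : ℝ => (2*x + 1)/Real.sqrt 3) (2/Real.sqrt 3) x := by
      exact (((hasDerivAt_id x).const_mul 2).add_const 1).div_const _ |>.congr_deriv (by ring)
    exact (hin.arctan).const_mul _
  have dq5 : HasDerivAt (fun x : ℝ => x^2 + Real.sqrt 3 * x + 1) (2*x + Real.sqrt 3) x := by
    have := ((hasDerivAt_pow 2 x).add ((hasDerivAt_id x).const_mul (Real.sqrt 3))).add_const 1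
    simpa using this
  have d10 : HasDerivAt (fun x : ℝ => (1 + Real.sqrt 3 / 2) * Real.log (x^2 + Real.sqrt 3 * x + 1))
      ((1 + Real.sqrt 3 / 2) * ((2*x + Real.sqrt 3) / (x^2 + Real.sqrt 3 * x + 1))) x :=
    (dq5.log hq5.ne').const_mul _
  have d11 : HasDerivAt (fun x : ℝ => Real.arctan (2*x + Real.sqrt 3))
      (2 / (1 + (2*x + Real.sqrt 3)^2)) x := by
    have hin : HasDerivAt (fun x : ℝ => 2*x + Real.sqrt 3) 2 x := by
      simpa using ((hasDerivAt_id x).const_mul 2).add_const (Real.sqrt 3)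
    have := hin.arctan
    simpa [div_eq_mul_inv, mul_comm] using this
  have D := (((((((((d1.add d2).sub d3).add d4).sub d5).add d6).sub d7).add d8).sub d9).add d10).sub d11
  have hD : HasDerivAt Aa (2 * (1 / (x + 1))
      + (1 - Real.sqrt 3 / 2) * ((2*x - Real.sqrt 3) / (x^2 - Real.sqrt 3 * x + 1))
      - 2 / (1 + (2*x - Real.sqrt 3)^2)
      + (1/2) * ((2*x - 1) / (x^2 - x + 1))
      - Real.sqrt 3 * (1 / (1 + ((2*x - 1)/Real.sqrt 3)^2) * (2/Real.sqrt 3))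
      + (2*x) / (x^2 + 1) - 2 * (1 / (1 + x^2))
      + (3/2) * ((2*x + 1) / (x^2 + x + 1))
      - Real.sqrt 3 * (1 / (1 + ((2*x + 1)/Real.sqrt 3)^2) * (2/Real.sqrt 3))
      + (1 + Real.sqrt 3 / 2) * ((2*x + Real.sqrt 3) / (x^2 + Real.sqrt 3 * x + 1))
      - 2 / (1 + (2*x + Real.sqrt 3)^2)) x := D
  convert hD using 1
  have e1 : (0:ℝ) < 1 + (2*x - Real.sqrt 3)^2 := by positivity
  have e2 : (0:ℝ) < 1 + ((2*x - 1)/Real.sqrt 3)^2 := by positivity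
  have e4 : (0:ℝ) < 1 + ((2*x + 1)/Real.sqrt 3)^2 := by positivity
  have e5 : (0:ℝ) < 1 + (2*x + Real.sqrt 3)^2 := by positivity
  have s3 : 2 / (1 + (2*x - Real.sqrt 3)^2) = (1/2) / (x^2 - Real.sqrt 3*x + 1) := by
    rw [div_eq_div_iff e1.ne' hq1.ne']
    linear_combination (-1/2 : ℝ) * hr
  have s11 : 2 / (1 + (2*x + Real.sqrt 3)^2) = (1/2) / (x^2 + Real.sqrt 3*x + 1) := by
    rw [div_eq_div_iff e5.ne' hq5.ne']
    linear_combination (-1/2 : ℝ) * hr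
  have s5 : Real.sqrt 3 * (1 / (1 + ((2*x - 1)/Real.sqrt 3)^2) * (2/Real.sqrt 3))
      = (3/2) / (x^2 - x + 1) := by
    rw [div_pow, hr]
    rw [show (1 + (2*x-1)^2/3) = (4*(x^2 - x + 1))/3 by ring]
    field_simp
    ring
  have s9 : Real.sqrt 3 * (1 / (1 + ((2*x + 1)/Real.sqrt 3)^2) * (2/Real.sqrt 3))
      = (3/2) / (x^2 + x + 1) := by
    rw [div_pow, hr]
    rw [show (1 + (2*x+1)^2/3) = (4*(x^2 + x + 1))/3 by ring]
    field_simp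
    ring
  have s7 : 2 * (1 / (1 + x^2)) = 2 / (x^2 + 1) := by rw [mul_one_div, add_comm]
  rw [s3, s5, s7, s9, s11]
  unfold Pp
  rw [← combine hx, ← pairA hr hq1 hq5, ← pairB hq2 hq4, ← pairC h1 hq3]
  ring

noncomputable def Ff (x : ℝ) : ℝ := 12/11*x^11 - Aa x

lemma integral_g0 : ∫ x in Set.Ioo (0:ℝ) 1, (12*x^10 - 12*x^10/Pp x) = 12/11 - Aa 1 := by
  rw [← MeasureTheory.integral_Ioc_eq_integral_Ioo,
      ← intervalIntegral.integral_of_le (by norm_num : (0:ℝ) ≤ 1)]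
  have hderiv : ∀ x ∈ Set.uIcc (0:ℝ) 1, HasDerivAt Ff (12*x^10 - 12*x^10/Pp x) x := by
    intro x hx
    rw [Set.uIcc_of_le (by norm_num)] at hx
    have h1 : HasDerivAt (fun x : ℝ => 12/11*x^11) (12*x^10) x := by
      have := (hasDerivAt_pow 11 x).const_mul (12/11 : ℝ)
      refine this.congr_deriv ?_
      norm_num
      ring
    exact h1.sub (hasDerivAt_Aa hx.1)
  have hcont : IntervalIntegrable (fun x : ℝ => 12*x^10 - 12*x^10/Pp x) volume 0 1 := by
    apply ContinuousOn.intervalIntegrable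
    apply ContinuousOn.sub (by fun_prop)
    apply ContinuousOn.div (by fun_prop) Pp_cont.continuousOn
    intro x hx
    rw [Set.uIcc_of_le (by norm_num)] at hx
    exact (hPp hx.1).ne'
  rw [intervalIntegral.integral_eq_sub_of_hasDerivAt hderiv hcont]
  unfold Ff
  rw [Aa_zero]
  norm_num

theorem stmt_15 :
    (∑' m : ℕ, (23/12 : ℝ) / ((m + 1) * (m + (23/12 : ℝ)))) = (23/11) * (12/11 - Real.log 24 + (2 + Real.sqrt 3) * Real.pi / 2 + Real.sqrt 3 * Real.log (2 - Real.sqrt 3) - Real.log (Real.sqrt 3)) := by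
  have hterm : ∀ m : ℕ, (23/12 : ℝ) / ((m + 1) * (m + (23/12 : ℝ))) =
      (23/11) * (12/(12*(m:ℝ)+12) - 12/(12*(m:ℝ)+23)) := by
    intro m
    have h0 : (0:ℝ) < (m:ℝ)+1 := by positivity
    have h1 : (0:ℝ) < (m:ℝ) + 23/12 := by positivity
    have h2 : (0:ℝ) < 12*(m:ℝ)+12 := by positivity
    have h3 : (0:ℝ) < 12*(m:ℝ)+23 := by positivity
    field_simp
    ring
  rw [tsum_congr hterm, tsum_mul_left, swap_sum_integral, integral_g0, Aa_one]
  ring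
end

section
/- The series ∑_{m=0}^∞ a/((m+1)(m+a)) with a = 13/8 equals (13/50)·(16 + 5(√2−1)·π − 40·log 2 + 10√2·log(1+√2)). -/
open Real MeasureTheory

noncomputable def Fa (t : ℝ) : ℝ :=
  t^5/5 - Real.log (1+t)/4 - Real.log (1+t^2)/8 - Real.arctan t/4 - Real.log (1+t^4)/8
  + Real.sqrt 2/16 * (Real.log (t^2 + Real.sqrt 2 * t + 1) - Real.log (t^2 - Real.sqrt 2 * t + 1))
  + Real.sqrt 2/8 * (Real.arctan (Real.sqrt 2 * t + 1) + Real.arctan (Real.sqrt 2 * t - 1))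

noncomputable def ga (t : ℝ) : ℝ :=
  t^4 - (1/4)/(1+t) - (1/4)*(t+1)/(1+t^2) + (1/2)*(1-t^3)/(1+t^4)

lemma hm_pos (s t : ℝ) (hs : s^2 = 2) : 0 < t^2 - s*t + 1 := by
  nlinarith [sq_nonneg (2*t - s)]

lemma hp_pos (t : ℝ) (ht : 0 ≤ t) : 0 < t^2 + Real.sqrt 2 * t + 1 := by
  have : 0 ≤ Real.sqrt 2 * t := mul_nonneg (Real.sqrt_nonneg 2) ht
  positivity

lemma sqrtpart (s t : ℝ) (hs : s^2 = 2) (hp : (0:ℝ) < t^2+s*t+1) (hm : (0:ℝ) < t^2-s*t+1) :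
    s/16 * ((2*t+s)/(t^2+s*t+1) - (2*t-s)/(t^2-s*t+1))
      + s/8 * (s/(1+(s*t+1)^2) + s/(1+(s*t-1)^2)) = (1/2)/(1+t^4) := by
  have e1 : 1 + (s*t+1)^2 = 2*(t^2+s*t+1) := by linear_combination t^2*hs
  have e2 : 1 + (s*t-1)^2 = 2*(t^2-s*t+1) := by linear_combination t^2*hs
  have h4 : (0:ℝ) < 1+t^4 := by positivity
  rw [e1, e2]
  have hP2 : t*(t+s)+1 ≠ 0 := by nlinarith
  have hM2 : t*(t-s)+1 ≠ 0 := by nlinarith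
  field_simp
  linear_combination (64 + 128*t^2 + 64*t^4) * hs

lemma Fa_hasDeriv (t : ℝ) (ht : 0 ≤ t) : HasDerivAt Fa (ga t) t := by
  have hs : Real.sqrt 2 ^ 2 = 2 := Real.sq_sqrt (by norm_num)
  have h1 : (0:ℝ) < 1 + t := by linarith
  have h2 : (0:ℝ) < 1 + t^2 := by positivity
  have h4 : (0:ℝ) < 1 + t^4 := by positivity
  have hp := hp_pos t ht
  have hm := hm_pos (Real.sqrt 2) t hs
  have d1 : HasDerivAt (fun t : ℝ => t^5/5) (t^4) t := by
    have := (hasDerivAt_pow 5 t).div_const 5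
    exact this.congr_deriv (by push_cast; ring)
  have d2 : HasDerivAt (fun t : ℝ => Real.log (1+t)/4) ((1/(1+t))/4) t := by
    have inner : HasDerivAt (fun t : ℝ => 1+t) 1 t := (hasDerivAt_id t).const_add 1
    exact (inner.log h1.ne').div_const 4
  have d3 : HasDerivAt (fun t : ℝ => Real.log (1+t^2)/8) ((2*t/(1+t^2))/8) t := by
    have inner : HasDerivAt (fun t : ℝ => 1+t^2) (2*t) t := by
      have := (hasDerivAt_pow 2 t).const_add 1
      exact this.congr_deriv (by push_cast; ring)
    exact (inner.log h2.ne').div_const 8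
  have d4 : HasDerivAt (fun t : ℝ => Real.arctan t/4) ((1/(1+t^2))/4) t :=
    (Real.hasDerivAt_arctan t).div_const 4
  have d5 : HasDerivAt (fun t : ℝ => Real.log (1+t^4)/8) ((4*t^3/(1+t^4))/8) t := by
    have inner : HasDerivAt (fun t : ℝ => 1+t^4) (4*t^3) t := by
      have := (hasDerivAt_pow 4 t).const_add 1
      exact this.congr_deriv (by push_cast; ring)
    exact (inner.log h4.ne').div_const 8
  have dqp : HasDerivAt (fun t : ℝ => t^2 + Real.sqrt 2 * t + 1) (2*t + Real.sqrt 2) t := by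
    have := ((hasDerivAt_pow 2 t).add (((hasDerivAt_id t).const_mul (Real.sqrt 2)))).add_const 1
    exact this.congr_deriv (by push_cast; ring)
  have dqm : HasDerivAt (fun t : ℝ => t^2 - Real.sqrt 2 * t + 1) (2*t - Real.sqrt 2) t := by
    have := ((hasDerivAt_pow 2 t).sub (((hasDerivAt_id t).const_mul (Real.sqrt 2)))).add_const 1
    exact this.congr_deriv (by push_cast; ring)
  have d6 : HasDerivAt (fun t : ℝ => Real.sqrt 2/16 * (Real.log (t^2 + Real.sqrt 2 * t + 1) - Real.log (t^2 - Real.sqrt 2 * t + 1)))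
      (Real.sqrt 2/16 * ((2*t + Real.sqrt 2)/(t^2 + Real.sqrt 2 * t + 1) - (2*t - Real.sqrt 2)/(t^2 - Real.sqrt 2 * t + 1))) t :=
    ((dqp.log hp.ne').sub (dqm.log hm.ne')).const_mul _
  have dlp : HasDerivAt (fun t : ℝ => Real.sqrt 2 * t + 1) (Real.sqrt 2) t := by
    have := ((hasDerivAt_id t).const_mul (Real.sqrt 2)).add_const 1
    exact this.congr_deriv (by ring)
  have dlm : HasDerivAt (fun t : ℝ => Real.sqrt 2 * t - 1) (Real.sqrt 2) t := by
    have := ((hasDerivAt_id t).const_mul (Real.sqrt 2)).sub_const 1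
    exact this.congr_deriv (by ring)
  have d7 : HasDerivAt (fun t : ℝ => Real.sqrt 2/8 * (Real.arctan (Real.sqrt 2 * t + 1) + Real.arctan (Real.sqrt 2 * t - 1)))
      (Real.sqrt 2/8 * (Real.sqrt 2/(1 + (Real.sqrt 2 * t + 1)^2) + Real.sqrt 2/(1 + (Real.sqrt 2 * t - 1)^2))) t := by
    have := ((dlp.arctan).add (dlm.arctan)).const_mul (Real.sqrt 2/8)
    exact this.congr_deriv (by ring)
  have H := ((((d1.sub d2).sub d3).sub d4).sub d5).add d6 |>.add d7
  have heq : t^4 - (1/(1+t))/4 - (2*t/(1+t^2))/8 - (1/(1+t^2))/4 - (4*t^3/(1+t^4))/8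
      + Real.sqrt 2/16 * ((2*t + Real.sqrt 2)/(t^2 + Real.sqrt 2 * t + 1) - (2*t - Real.sqrt 2)/(t^2 - Real.sqrt 2 * t + 1))
      + Real.sqrt 2/8 * (Real.sqrt 2/(1 + (Real.sqrt 2 * t + 1)^2) + Real.sqrt 2/(1 + (Real.sqrt 2 * t - 1)^2)) = ga t := by
    unfold ga
    linear_combination sqrtpart (Real.sqrt 2) t hs hp hm
  rw [heq] at H
  exact H

lemma int_fm (m : ℕ) : ∫ t in Set.Ioo (0:ℝ) 1, (t^7 - t^12)*(t^8)^m
    = 1/(8*(m:ℝ)+8) - 1/(8*(m:ℝ)+13) := by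
  rw [← MeasureTheory.integral_Ioc_eq_integral_Ioo,
    ← intervalIntegral.integral_of_le (zero_le_one)]
  have h : ∀ t : ℝ, (t^7 - t^12)*(t^8)^m = t^(8*m+7) - t^(8*m+12) := by
    intro t; rw [← pow_mul]; ring
  rw [intervalIntegral.integral_congr (fun t _ => h t)]
  rw [intervalIntegral.integral_sub (intervalIntegral.intervalIntegrable_pow _)
    (intervalIntegral.intervalIntegrable_pow _), integral_pow, integral_pow]
  rw [one_pow, one_pow, zero_pow (by omega), zero_pow (by omega)]
  push_cast
  ring

lemma ga_contOn : ContinuousOn ga (Set.Icc (0:ℝ) 1) := by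
  unfold ga
  have h1 : ∀ t ∈ Set.Icc (0:ℝ) 1, 1 + t ≠ 0 := fun t ht => by have := ht.1; positivity
  have h2 : ∀ t ∈ Set.Icc (0:ℝ) 1, 1 + t^2 ≠ 0 := fun t ht => by positivity
  have h4 : ∀ t ∈ Set.Icc (0:ℝ) 1, 1 + t^4 ≠ 0 := fun t ht => by positivity
  exact (((continuousOn_pow 4).sub
    (ContinuousOn.div continuousOn_const (by fun_prop) h1)).sub
    (ContinuousOn.div (by fun_prop) (by fun_prop) h2)).add
    (ContinuousOn.div (by fun_prop) (by fun_prop) h4)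

lemma Fa0 : Fa 0 = 0 := by
  norm_num [Fa, Real.arctan_neg, Real.arctan_one]

lemma arc_sum : Real.arctan (Real.sqrt 2 + 1) + Real.arctan (Real.sqrt 2 - 1) = Real.pi/2 := by
  have hs : Real.sqrt 2 ^ 2 = 2 := Real.sq_sqrt (by norm_num)
  have hpos : (0:ℝ) < Real.sqrt 2 + 1 := by positivity
  have hmul : (Real.sqrt 2 - 1) * (Real.sqrt 2 + 1) = 1 := by linear_combination hs
  have hinv : (Real.sqrt 2 + 1)⁻¹ = Real.sqrt 2 - 1 := inv_eq_of_mul_eq_one_left hmul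
  rw [← hinv, Real.arctan_inv_of_pos hpos]
  ring

lemma log_diff : Real.log (2 + Real.sqrt 2) - Real.log (2 - Real.sqrt 2)
    = 2 * Real.log (1 + Real.sqrt 2) := by
  have hs : Real.sqrt 2 ^ 2 = 2 := Real.sq_sqrt (by norm_num)
  have h0 : (0:ℝ) < Real.sqrt 2 := Real.sqrt_pos.mpr (by norm_num)
  have h1 : (0:ℝ) < 1 + Real.sqrt 2 := by positivity
  have e1 : 2 + Real.sqrt 2 = Real.sqrt 2 * (1 + Real.sqrt 2) := by linear_combination -1 * hs
  have e2' : Real.sqrt 2 / (1 + Real.sqrt 2) = 2 - Real.sqrt 2 := by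
    rw [div_eq_iff h1.ne']
    linear_combination hs
  have e2 : 2 - Real.sqrt 2 = Real.sqrt 2 * (1 + Real.sqrt 2)⁻¹ := by
    rw [div_eq_mul_inv] at e2'
    exact e2'.symm
  rw [e1, e2, Real.log_mul h0.ne' h1.ne', Real.log_mul h0.ne' (inv_ne_zero h1.ne'),
    Real.log_inv]
  ring

lemma Fa1 : Fa 1 = 1/5 - Real.log 2/2 - Real.pi/16
    + Real.sqrt 2/8 * Real.log (1 + Real.sqrt 2) + Real.sqrt 2 * Real.pi/16 := by
  have e1 : (1:ℝ)^2 + Real.sqrt 2 * 1 + 1 = 2 + Real.sqrt 2 := by ring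
  have e2 : (1:ℝ)^2 - Real.sqrt 2 * 1 + 1 = 2 - Real.sqrt 2 := by ring
  have e3 : Real.sqrt 2 * 1 + 1 = Real.sqrt 2 + 1 := by ring
  have e4 : Real.sqrt 2 * 1 - 1 = Real.sqrt 2 - 1 := by ring
  unfold Fa
  rw [e1, e2, e3, e4]
  norm_num [Real.arctan_one]
  rw [show Real.log (2 + Real.sqrt 2) - Real.log (2 - Real.sqrt 2)
      = 2 * Real.log (1 + Real.sqrt 2) from log_diff, arc_sum]
  ring

theorem stmt_16 :
    (∑' m : ℕ, (13/8 : ℝ) / ((m + 1) * (m + (13/8 : ℝ)))) = (13/50) * (16 + 5 * (Real.sqrt 2 - 1) * Real.pi - 40 * Real.log 2 + 10 * Real.sqrt 2 * Real.log (1 + Real.sqrt 2)) := by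
  have hint : ∀ m : ℕ, MeasureTheory.IntegrableOn
      (fun t : ℝ => (t^7 - t^12)*(t^8)^m) (Set.Ioo 0 1) := fun m =>
    ((Continuous.integrableOn_Icc (by continuity)).mono_set Set.Ioo_subset_Icc_self)
  have hnorm : ∀ m : ℕ, (∫ t in Set.Ioo (0:ℝ) 1, ‖(t^7 - t^12)*(t^8)^m‖)
      = 1/(8*(m:ℝ)+8) - 1/(8*(m:ℝ)+13) := by
    intro m
    rw [← int_fm m]
    apply MeasureTheory.setIntegral_congr_fun measurableSet_Ioo
    intro t ht
    have h1 : t^12 ≤ t^7 := pow_le_pow_of_le_one ht.1.le ht.2.le (by norm_num)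
    have h2 : (0:ℝ) ≤ (t^7 - t^12)*(t^8)^m :=
      mul_nonneg (by linarith) (by positivity)
    exact Real.norm_of_nonneg h2
  have hsum : Summable (fun m : ℕ => ∫ t in Set.Ioo (0:ℝ) 1, ‖(t^7 - t^12)*(t^8)^m‖) := by
    have base0 : Summable (fun n : ℕ => 1/(n:ℝ)^2) :=
      Real.summable_one_div_nat_pow.mpr one_lt_two
    have base : Summable (fun m : ℕ => 1/((m:ℝ)+1)^2) := by
      have := (_root_.summable_nat_add_iff 1).mpr base0
      simpa using this
    apply Summable.of_nonneg_of_le _ _ base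
    · intro m
      rw [hnorm m]
      have ha : (0:ℝ) < 8*(m:ℝ)+8 := by positivity
      have hb : (0:ℝ) < 8*(m:ℝ)+13 := by positivity
      have : (1:ℝ)/(8*(m:ℝ)+13) ≤ 1/(8*(m:ℝ)+8) :=
        one_div_le_one_div_of_le ha (by linarith)
      linarith
    · intro m
      rw [hnorm m]
      have ha : (0:ℝ) < 8*(m:ℝ)+8 := by positivity
      have hb : (0:ℝ) < 8*(m:ℝ)+13 := by positivity
      rw [div_sub_div _ _ ha.ne' hb.ne', div_le_div_iff₀ (by positivity) (by positivity)]
      nlinarith [sq_nonneg (m:ℝ), Nat.cast_nonneg (α := ℝ) m]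
  calc (∑' m : ℕ, (13/8 : ℝ) / ((m + 1) * (m + (13/8 : ℝ))))
      = ∑' m : ℕ, (104/5 : ℝ) * ∫ t in Set.Ioo (0:ℝ) 1, (t^7 - t^12)*(t^8)^m := by
        apply tsum_congr
        intro m
        rw [int_fm m]
        have ha : (0:ℝ) < (m:ℝ)+1 := by positivity
        have hb : (0:ℝ) < (m:ℝ)+13/8 := by positivity
        field_simp
        ring
    _ = (104/5 : ℝ) * ∑' m : ℕ, ∫ t in Set.Ioo (0:ℝ) 1, (t^7 - t^12)*(t^8)^m :=
        tsum_mul_left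
    _ = (104/5 : ℝ) * ∫ t in Set.Ioo (0:ℝ) 1, ∑' m : ℕ, (t^7 - t^12)*(t^8)^m := by
        rw [MeasureTheory.integral_tsum_of_summable_integral_norm hint hsum]
    _ = (104/5 : ℝ) * ∫ t in Set.Ioo (0:ℝ) 1, ga t := by
        congr 1
        apply MeasureTheory.setIntegral_congr_fun measurableSet_Ioo
        intro t ht
        have h8 : t^8 < 1 := pow_lt_one₀ ht.1.le ht.2 (by norm_num)
        have h8' : (0:ℝ) ≤ t^8 := by positivity
        have hne : (1:ℝ) - t^8 ≠ 0 := sub_ne_zero.mpr (ne_of_gt h8)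
        have h1 : (0:ℝ) < 1 + t := by linarith [ht.1]
        have h2 : (0:ℝ) < 1 + t^2 := by positivity
        have h4 : (0:ℝ) < 1 + t^4 := by positivity
        show (∑' m : ℕ, (t^7 - t^12)*(t^8)^m) = ga t
        rw [tsum_mul_left, tsum_geometric_of_lt_one h8' h8]
        unfold ga
        field_simp
        ring
    _ = (104/5 : ℝ) * (Fa 1 - Fa 0) := by
        congr 1
        rw [← MeasureTheory.integral_Ioc_eq_integral_Ioo,
          ← intervalIntegral.integral_of_le zero_le_one]
        apply intervalIntegral.integral_eq_sub_of_hasDerivAt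
        · intro t ht
          rw [Set.uIcc_of_le zero_le_one] at ht
          exact Fa_hasDeriv t ht.1
        · apply ContinuousOn.intervalIntegrable
          rw [Set.uIcc_of_le zero_le_one]
          exact ga_contOn
    _ = (13/50) * (16 + 5 * (Real.sqrt 2 - 1) * Real.pi - 40 * Real.log 2
        + 10 * Real.sqrt 2 * Real.log (1 + Real.sqrt 2)) := by
        rw [Fa1, Fa0]
        ring
end
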